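/- arXiv:2104.03563 — 3 statements merged into one kernel-verified Lean document; each statement's English description precedes it below -/
import Mathlib

section
/- With γ(z) = z^{1/2}/((z−a)^{1/4}(z−b)^{1/4}) on ℂ∖[0,b] (branch with γ(z)→1 at ∞) and Ñ(z) the matrix with diagonal entries (γ+γ⁻¹)/2 and off-diagonal entries (γ−γ⁻¹)/(∓2i), the boundary values satisfy: Ñ₊(x) = Ñ₋(x)·[[0,1],[−1,0]] for x ∈ (a,b), and Ñ₊(x) = −Ñ₋(x) for x ∈ (0,a). -/
/-!
Near a point `x ∈ (0, b)`, the factors `z^{1/2}` and `(z - c)^{1/4}` with `c < x` of `γ` are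
continuous. A factor `(z - c)^{1/4}` with `c > x` sees `z - c` approach the negative axis,
whose argument is `π` from above but `-π` from below, so its lower boundary value is
`exp(-2πi/4) = -i` times its upper one. Hence `γ₋ = i γ₊` on `(a, b)` (one such factor) and
`γ₋ = -γ₊` on `(0, a)` (two), and the jump relations follow from the identities
`Ñ(-i g) = Ñ(g) [[0,1],[-1,0]]` and `Ñ(-g) = -Ñ(g)` for the matrix `Ñ(g)` built from
`g = γ(z)`.
-/

open Filter Topology

namespace Complex

/-- The principal branch has `arg = π` on the negative axis, so `cpow` is continuous from the
closed upper half-plane: the upper boundary value on the cut is the value there. -/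
theorem continuousWithinAt_cpow_const_im_nonneg {w : ℂ} (hw : w ≠ 0) (r : ℂ) :
    ContinuousWithinAt (· ^ r) {z : ℂ | 0 ≤ z.im} w := by
  by_cases hs : w ∈ slitPlane
  · exact (continuousAt_cpow_const hs).continuousWithinAt
  · obtain ⟨hre, him⟩ : w.re < 0 ∧ w.im = 0 := by
      rw [mem_slitPlane_iff, not_or, not_lt, not_ne_iff] at hs
      exact ⟨hs.1.lt_of_ne fun h => hw (Complex.ext h hs.2), hs.2⟩
    have hlog := (continuousWithinAt_log_of_re_neg_of_im_zero hre him).mul_const r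
    refine (continuous_exp.continuousAt.comp_continuousWithinAt hlog).congr_of_eventuallyEq ?_
      (cpow_def_of_ne_zero hw r)
    filter_upwards [nhdsWithin_le_nhds (isOpen_ne.mem_nhds hw)] with z hz
    exact cpow_def_of_ne_zero hz r

theorem tendsto_cpow_const_nhdsWithin_im_neg {w : ℂ} (hre : w.re < 0) (him : w.im = 0) (r : ℂ) :
    Tendsto (· ^ r) (𝓝[{z : ℂ | z.im < 0}] w)
      (𝓝 (w ^ r * exp (-2 * Real.pi * I * r))) := by
  have hw : w ≠ 0 := fun h => by simp [h] at hre
  have hlim := (continuous_exp.tendsto _).comp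
    ((tendsto_log_nhdsWithin_im_neg_of_re_neg_of_im_zero hre him).mul_const r)
  have heq : (cexp ∘ fun z => log z * r) =ᶠ[𝓝[{z : ℂ | z.im < 0}] w] (· ^ r) := by
    filter_upwards [nhdsWithin_le_nhds (isOpen_ne.mem_nhds hw)] with z hz
    exact (cpow_def_of_ne_zero hz r).symm
  rw [cpow_def_of_ne_zero hw, ← exp_add, log, arg_eq_pi_iff.2 ⟨hre, him⟩]
  convert hlim.congr' heq using 3
  ring

theorem continuousWithinAt_sub_ofReal_cpow_im_nonneg {w : ℂ} {c : ℝ} (hw : w ≠ c) (r : ℂ) :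
    ContinuousWithinAt (fun z : ℂ => (z - c) ^ r) {z : ℂ | 0 ≤ z.im} w :=
  ContinuousWithinAt.comp (g := (· ^ r)) (x := w)
    (continuousWithinAt_cpow_const_im_nonneg (sub_ne_zero.2 hw) r)
    (continuous_sub_right (c : ℂ)).continuousWithinAt
    fun z (hz : 0 ≤ z.im) => show 0 ≤ (z - c).im by simpa using hz

theorem tendsto_sub_ofReal_cpow_nhdsWithin_im_neg {x c : ℝ} (h : x < c) (r : ℂ) :
    Tendsto (fun z : ℂ => (z - c) ^ r) (𝓝[{z : ℂ | z.im < 0}] (x : ℂ))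
      (𝓝 (((x : ℂ) - c) ^ r * exp (-2 * Real.pi * I * r))) := by
  have hshift : Tendsto (fun z : ℂ => z - c) (𝓝[{z : ℂ | z.im < 0}] (x : ℂ))
      (𝓝[{z : ℂ | z.im < 0}] ((x : ℂ) - c)) :=
    (continuous_sub_right (c : ℂ)).continuousWithinAt.tendsto_nhdsWithin
      fun z (hz : z.im < 0) => show (z - c).im < 0 by simpa using hz
  exact (tendsto_cpow_const_nhdsWithin_im_neg (by simpa using h) (by simp) r).comp hshift

theorem continuousAt_sub_ofReal_cpow {x c : ℝ} (h : c < x) (r : ℂ) :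
    ContinuousAt (fun z : ℂ => (z - c) ^ r) x :=
  ContinuousAt.comp (g := (· ^ r))
    (continuousAt_cpow_const (mem_slitPlane_iff.2 (.inl (by simpa using h))))
    (continuous_sub_right (c : ℂ)).continuousAt

theorem ofReal_sub_ofReal_cpow_ne_zero {x c : ℝ} (h : x ≠ c) (r : ℂ) :
    ((x : ℂ) - c) ^ r ≠ 0 :=
  cpow_ne_zero_iff.2 (.inl (sub_ne_zero.2 (mod_cast h)))

theorem exp_neg_two_pi_I_mul_quarter : exp (-2 * Real.pi * I * (1 / 4)) = -I := by
  rw [← exp_neg_pi_div_two_mul_I]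
  congr 1
  ring

instance nhdsWithin_im_pos_ofReal_neBot (x : ℝ) : (𝓝[{z : ℂ | 0 < z.im}] (x : ℂ)).NeBot :=
  mem_closure_iff_nhdsWithin_neBot.1 (by simp)

instance nhdsWithin_im_neg_ofReal_neBot (x : ℝ) : (𝓝[{z : ℂ | z.im < 0}] (x : ℂ)).NeBot :=
  mem_closure_iff_nhdsWithin_neBot.1 (by simp)

end Complex

section

open Complex

noncomputable def gammaFun (a b : ℝ) (z : ℂ) : ℂ :=
  z ^ ((1 : ℂ) / 2) / ((z - a) ^ ((1 : ℂ) / 4) * (z - b) ^ ((1 : ℂ) / 4))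

variable {a b x : ℝ}

theorem gammaFun_ofReal_ne_zero (hx : 0 < x) (ha : x ≠ a) (hb : x ≠ b) : gammaFun a b x ≠ 0 :=
  div_ne_zero (cpow_ne_zero_iff.2 (.inl (mod_cast hx.ne')))
    (mul_ne_zero (ofReal_sub_ofReal_cpow_ne_zero ha _) (ofReal_sub_ofReal_cpow_ne_zero hb _))

theorem tendsto_gammaFun_nhdsWithin_im_pos (hx : 0 < x) (ha : x ≠ a) (hb : x ≠ b) :
    Tendsto (gammaFun a b) (𝓝[{z : ℂ | 0 < z.im}] (x : ℂ)) (𝓝 (gammaFun a b x)) := by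
  have hroot : ContinuousWithinAt (· ^ ((1 : ℂ) / 2)) {z : ℂ | 0 ≤ z.im} (x : ℂ) :=
    continuousWithinAt_cpow_const_im_nonneg (mod_cast hx.ne') _
  have hcont : ContinuousWithinAt (gammaFun a b) {z : ℂ | 0 ≤ z.im} (x : ℂ) :=
    hroot.div ((continuousWithinAt_sub_ofReal_cpow_im_nonneg (mod_cast ha) _).mul
      (continuousWithinAt_sub_ofReal_cpow_im_nonneg (mod_cast hb) _))
      (mul_ne_zero (ofReal_sub_ofReal_cpow_ne_zero ha _) (ofReal_sub_ofReal_cpow_ne_zero hb _))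
  exact hcont.tendsto.mono_left (nhdsWithin_mono _ fun z (hz : 0 < z.im) => hz.le)

theorem tendsto_gammaFun_nhdsWithin_im_neg_of_mem_Ioo (hx : 0 < x) (hxab : x ∈ Set.Ioo a b) :
    Tendsto (gammaFun a b) (𝓝[{z : ℂ | z.im < 0}] (x : ℂ)) (𝓝 (I * gammaFun a b x)) := by
  have hroot := (continuousAt_cpow_const (b := (1 : ℂ) / 2) (ofReal_mem_slitPlane.2 hx)).tendsto
  have hfa := (continuousAt_sub_ofReal_cpow hxab.1 ((1 : ℂ) / 4)).tendsto
  have hfb := tendsto_sub_ofReal_cpow_nhdsWithin_im_neg hxab.2 ((1 : ℂ) / 4)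
  rw [exp_neg_two_pi_I_mul_quarter] at hfb
  have hlim := (hroot.mono_left nhdsWithin_le_nhds).div
    ((hfa.mono_left nhdsWithin_le_nhds).mul hfb)
    (mul_ne_zero (ofReal_sub_ofReal_cpow_ne_zero hxab.1.ne' _)
      (mul_ne_zero (ofReal_sub_ofReal_cpow_ne_zero hxab.2.ne _) (neg_ne_zero.2 I_ne_zero)))
  have hval : I * gammaFun a b x = (x : ℂ) ^ ((1 : ℂ) / 2)
      / (((x : ℂ) - a) ^ ((1 : ℂ) / 4) * (((x : ℂ) - b) ^ ((1 : ℂ) / 4) * -I)) := by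
    unfold gammaFun
    field_simp
    rw [I_sq]
    ring
  rw [hval]
  exact hlim

theorem tendsto_gammaFun_nhdsWithin_im_neg_of_lt_of_lt (hx : 0 < x) (ha : x < a) (hb : x < b) :
    Tendsto (gammaFun a b) (𝓝[{z : ℂ | z.im < 0}] (x : ℂ)) (𝓝 (-gammaFun a b x)) := by
  have hroot := (continuousAt_cpow_const (b := (1 : ℂ) / 2) (ofReal_mem_slitPlane.2 hx)).tendsto
  have hfa := tendsto_sub_ofReal_cpow_nhdsWithin_im_neg ha ((1 : ℂ) / 4)
  have hfb := tendsto_sub_ofReal_cpow_nhdsWithin_im_neg hb ((1 : ℂ) / 4)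
  rw [exp_neg_two_pi_I_mul_quarter] at hfa hfb
  have hlim := (hroot.mono_left nhdsWithin_le_nhds).div (hfa.mul hfb)
    (mul_ne_zero (mul_ne_zero (ofReal_sub_ofReal_cpow_ne_zero ha.ne _) (neg_ne_zero.2 I_ne_zero))
      (mul_ne_zero (ofReal_sub_ofReal_cpow_ne_zero hb.ne _) (neg_ne_zero.2 I_ne_zero)))
  have hval : -gammaFun a b x = (x : ℂ) ^ ((1 : ℂ) / 2)
      / (((x : ℂ) - a) ^ ((1 : ℂ) / 4) * -I * (((x : ℂ) - b) ^ ((1 : ℂ) / 4) * -I)) := by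
    unfold gammaFun
    field_simp
    rw [I_sq]
    ring
  rw [hval]
  exact hlim

noncomputable def modelMatrix (g : ℂ) : Matrix (Fin 2) (Fin 2) ℂ :=
  !![(g + g⁻¹) / 2, (g - g⁻¹) / (-2 * I);
     (g - g⁻¹) / (2 * I), (g + g⁻¹) / 2]

theorem modelMatrix_neg (g : ℂ) : modelMatrix (-g) = -modelMatrix g := by
  ext i j
  fin_cases i <;> fin_cases j <;> simp [modelMatrix] <;> ring

theorem modelMatrix_neg_I_mul (g : ℂ) :
    modelMatrix (-I * g) = modelMatrix g * !![0, 1; -1, 0] := by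
  ext i j
  fin_cases i <;> fin_cases j <;> simp [modelMatrix, Matrix.mul_apply, inv_I] <;>
    field_simp <;> ring_nf <;> simp only [I_sq] <;> ring

theorem continuousAt_modelMatrix {g : ℂ} (hg : g ≠ 0) : ContinuousAt modelMatrix g := by
  unfold modelMatrix
  fun_prop (disch := exact hg)

theorem eq_modelMatrix_of_tendsto {l : Filter ℂ} [l.NeBot] {f : ℂ → ℂ} {g : ℂ}
    {M : Matrix (Fin 2) (Fin 2) ℂ} (hg : g ≠ 0) (hf : Tendsto f l (𝓝 g))
    (hM : Tendsto (modelMatrix ∘ f) l (𝓝 M)) : M = modelMatrix g :=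
  tendsto_nhds_unique hM ((continuousAt_modelMatrix hg).tendsto.comp hf)

end

/-- Jump relations of the global parametrix `Ñ` across `(a,b)` and `(0,a)`:
`Ñ₊ = Ñ₋·[[0,1],[−1,0]]` on `(a,b)` and `Ñ₊ = −Ñ₋` on `(0,a)`. -/
theorem stmt_5 (a b : ℝ) (ha : 0 < a) (hab : a < b)
    (γ : ℂ → ℂ)
    (hγ : ∀ z : ℂ, γ z = z ^ ((1 : ℂ) / 2)
      / ((z - (a : ℂ)) ^ ((1 : ℂ) / 4) * (z - (b : ℂ)) ^ ((1 : ℂ) / 4)))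
    (N : ℂ → Matrix (Fin 2) (Fin 2) ℂ)
    (hN : ∀ z : ℂ, N z =
      !![(γ z + (γ z)⁻¹) / 2, (γ z - (γ z)⁻¹) / (-2 * Complex.I);
         (γ z - (γ z)⁻¹) / (2 * Complex.I), (γ z + (γ z)⁻¹) / 2]) :
    (∀ x ∈ Set.Ioo a b, ∀ Np Nm : Matrix (Fin 2) (Fin 2) ℂ,
      Tendsto N (nhdsWithin (x : ℂ) {z : ℂ | 0 < z.im}) (nhds Np) →
      Tendsto N (nhdsWithin (x : ℂ) {z : ℂ | z.im < 0}) (nhds Nm) →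
      Np = Nm * !![0, 1; -1, 0]) ∧
    (∀ x ∈ Set.Ioo (0 : ℝ) a, ∀ Np Nm : Matrix (Fin 2) (Fin 2) ℂ,
      Tendsto N (nhdsWithin (x : ℂ) {z : ℂ | 0 < z.im}) (nhds Np) →
      Tendsto N (nhdsWithin (x : ℂ) {z : ℂ | z.im < 0}) (nhds Nm) →
      Np = -Nm) := by
  obtain rfl : γ = gammaFun a b := funext hγ
  obtain rfl : N = modelMatrix ∘ gammaFun a b := funext hN
  refine ⟨fun x hxab Np Nm hp hm => ?_, fun x ⟨hx, hxa⟩ Np Nm hp hm => ?_⟩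
  · have hx : 0 < x := ha.trans hxab.1
    have hg := gammaFun_ofReal_ne_zero hx hxab.1.ne' hxab.2.ne
    rw [eq_modelMatrix_of_tendsto hg
        (tendsto_gammaFun_nhdsWithin_im_pos hx hxab.1.ne' hxab.2.ne) hp,
      eq_modelMatrix_of_tendsto (mul_ne_zero Complex.I_ne_zero hg)
        (tendsto_gammaFun_nhdsWithin_im_neg_of_mem_Ioo hx hxab) hm,
      ← modelMatrix_neg_I_mul, ← mul_assoc, neg_mul, Complex.I_mul_I, neg_neg, one_mul]
  · have hxb := hxa.trans hab
    have hg := gammaFun_ofReal_ne_zero hx hxa.ne hxb.ne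
    rw [eq_modelMatrix_of_tendsto hg (tendsto_gammaFun_nhdsWithin_im_pos hx hxa.ne hxb.ne) hp,
      eq_modelMatrix_of_tendsto (neg_ne_zero.2 hg)
        (tendsto_gammaFun_nhdsWithin_im_neg_of_lt_of_lt hx hxa hxb) hm, modelMatrix_neg, neg_neg]
end

section
/- As z → ∞, the Szegő function D(z) = ((√a+√b)z/(z + √(ab) + √((z−a)(z−b))))^{α−1/2} satisfies D(z) = D_∞ (1 + (2α−1)(a+b−2√(ab))/(8z) + O(1/z²)), where D_∞ = ((√a+√b)/2)^{α−1/2}. -/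
/-!
Substituting `u = 1/z`, the principal branches split as
`(z - c)^(1/2) = z^(1/2) (1 - c u)^(1/2)` for `|c| < |z|`, so
`D(1/u) = ((√a + √b) / (1 + √(ab) u + (1 - a u)^(1/2) (1 - b u)^(1/2)))^(α - 1/2)`
is analytic at `u = 0`. Its first-order Taylor expansion at `0`, with `O(u²)` remainder, is the
claimed expansion: the value at `0` is `D_∞` and the chain rule gives the coefficient of `u`.
-/

open Complex Real Filter Asymptotics Topology Bornology

namespace Complex

lemma arg_mul_eq_add_arg_of_im_mul_eq {z w : ℂ} (hz : z ≠ 0) (hw : 0 < w.re)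
    (h : (z * w).im = z.im) : arg (z * w) = arg z + arg w := by
  have hw0 : w ≠ 0 := fun h0 => by simp [h0] at hw
  -- both sides agree mod `2π`, and the sign information bounds their difference by `2π`
  obtain ⟨k, hk⟩ : ∃ k : ℤ, arg (z * w) - (arg z + arg w) = 2 * π * k := by
    rw [← Real.Angle.angle_eq_iff_two_pi_dvd_sub, Real.Angle.coe_add]
    exact arg_mul_coe_angle hz hw0
  have hwarg := abs_lt.1 (abs_arg_lt_pi_div_two_iff.2 (Or.inl hw))
  have hk_lt : |(k : ℝ)| < 1 := by
    have := neg_pi_lt_arg z; have := arg_le_pi z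
    have := neg_pi_lt_arg (z * w); have := arg_le_pi (z * w)
    rw [abs_lt]
    rcases le_or_gt 0 z.im with him | him
    · have := arg_nonneg_iff.2 him
      have := arg_nonneg_iff.2 (h ▸ him)
      constructor <;> nlinarith [pi_pos]
    · have := arg_neg_iff.2 him
      have := arg_neg_iff.2 (h ▸ him)
      constructor <;> nlinarith [pi_pos]
  obtain rfl : k = 0 := Int.abs_lt_one_iff.1 (by exact_mod_cast hk_lt)
  simpa [sub_eq_zero] using hk

lemma mul_cpow_of_arg_mul_eq_add_arg {x y : ℂ} (hx : x ≠ 0) (hy : y ≠ 0)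
    (h : arg (x * y) = arg x + arg y) (s : ℂ) : (x * y) ^ s = x ^ s * y ^ s := by
  rw [cpow_def_of_ne_zero (mul_ne_zero hx hy), cpow_def_of_ne_zero hx, cpow_def_of_ne_zero hy,
    log_mul hx hy ((arg_mul_eq_add_arg_iff hx hy).1 h), add_mul, exp_add]

lemma sub_ofReal_cpow {c : ℝ} {z : ℂ} (hc : |c| < ‖z‖) (s : ℂ) :
    (z - c) ^ s = z ^ s * (1 - c * z⁻¹) ^ s := by
  have hz : z ≠ 0 := norm_pos_iff.1 ((abs_nonneg c).trans_lt hc)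
  have hre : 0 < (1 - c * z⁻¹).re := by
    have : ‖(c : ℂ) * z⁻¹‖ < 1 := by
      rwa [norm_mul, norm_inv, norm_real, Real.norm_eq_abs, mul_inv_lt_iff₀ (by positivity),
        one_mul]
    have := (re_le_norm _).trans_lt this
    simp only [sub_re, one_re] at this ⊢
    linarith
  have hsplit : z - c = z * (1 - c * z⁻¹) := by field_simp
  rw [hsplit, mul_cpow_of_arg_mul_eq_add_arg hz (fun h => by simp [h] at hre)]
  exact arg_mul_eq_add_arg_of_im_mul_eq hz hre (by rw [← hsplit]; simp)

end Complex

lemma AnalyticAt.isBigO_sub_sub_smul_deriv {𝕜 E : Type*} [NontriviallyNormedField 𝕜]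
    [NormedAddCommGroup E] [NormedSpace 𝕜 E] {f : 𝕜 → E} {x : 𝕜} (hf : AnalyticAt 𝕜 f x) :
    (fun h => f (x + h) - f x - h • deriv f x) =O[𝓝 0] fun h => ‖h‖ ^ 2 := by
  obtain ⟨p, hp⟩ := hf
  have hsum : ∀ h, p.partialSum 2 h = f x + h • deriv f x := fun h => by
    simp [FormalMultilinearSeries.partialSum, Finset.sum_range_succ, hp.deriv,
      p.apply_eq_pow_smul_coeff, ← hp.coeff_zero 1]
  simpa only [sub_sub, hsum] using hp.isBigO_sub_partialSum_pow 2

lemma hasDerivAt_one_sub_mul_cpow (c s : ℂ) :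
    HasDerivAt (fun u : ℂ => (1 - c * u) ^ s) (-(s * c)) 0 := by
  have hlin : HasDerivAt (fun u : ℂ => 1 - c * u) (-c) 0 := by
    simpa using ((hasDerivAt_id (0 : ℂ)).const_mul c).const_sub 1
  simpa using hlin.cpow_const (c := s) (by simp)

lemma analyticAt_one_sub_mul_cpow (c s : ℂ) :
    AnalyticAt ℂ (fun u : ℂ => (1 - c * u) ^ s) 0 :=
  (analyticAt_const.sub (analyticAt_const.mul analyticAt_id)).cpow analyticAt_const (by simp)

noncomputable def szegoDenom (a b : ℝ) (u : ℂ) : ℂ :=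
  1 + √(a * b) * u + (1 - a * u) ^ (1 / 2 : ℂ) * (1 - b * u) ^ (1 / 2 : ℂ)

/-- `szegoInv a b α u = D (1 / u)` once `|a|, |b| < 1 / |u|`, see `mul_szegoDenom_inv`. -/
noncomputable def szegoInv (a b α : ℝ) (u : ℂ) : ℂ :=
  ((√a + √b : ℝ) / szegoDenom a b u) ^ (α - 1 / 2 : ℂ)

section
variable (a b α : ℝ)

lemma szegoDenom_zero : szegoDenom a b 0 = 2 := by
  norm_num [szegoDenom]

lemma hasDerivAt_szegoDenom : HasDerivAt (szegoDenom a b) (√(a * b) - (a + b) / 2) 0 := by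
  have h : HasDerivAt (szegoDenom a b) _ 0 :=
    ((hasDerivAt_id (0 : ℂ)).const_mul (√(a * b) : ℂ)).const_add 1 |>.add
      ((hasDerivAt_one_sub_mul_cpow a (1 / 2)).mul (hasDerivAt_one_sub_mul_cpow b (1 / 2)))
  convert h using 1
  norm_num; ring

lemma analyticAt_szegoDenom : AnalyticAt ℂ (szegoDenom a b) 0 :=
  (analyticAt_const.add (analyticAt_const.mul analyticAt_id)).add
    ((analyticAt_one_sub_mul_cpow _ _).mul (analyticAt_one_sub_mul_cpow _ _))

variable {a}

lemma szegoInv_base_zero_mem_slitPlane (ha : 0 < a) :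
    ((√a + √b : ℝ) : ℂ) / szegoDenom a b 0 ∈ slitPlane := by
  rw [szegoDenom_zero, ← ofReal_ofNat, ← ofReal_div]
  exact ofReal_mem_slitPlane.2 (by positivity)

lemma analyticAt_szegoInv (ha : 0 < a) : AnalyticAt ℂ (szegoInv a b α) 0 :=
  (analyticAt_const.div (analyticAt_szegoDenom a b) (by simp [szegoDenom_zero])).cpow
    analyticAt_const (szegoInv_base_zero_mem_slitPlane b ha)

lemma szegoInv_zero : szegoInv a b α 0 = (((√a + √b) / 2) ^ (α - 1 / 2) : ℝ) := by
  rw [szegoInv, szegoDenom_zero, ofReal_cpow (by positivity)]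
  push_cast; ring_nf

lemma deriv_szegoInv_zero (ha : 0 < a) :
    deriv (szegoInv a b α) 0 =
      szegoInv a b α 0 * ((2 * α - 1) * (a + b - 2 * √(a * b)) : ℝ) / 8 := by
  have h : HasDerivAt (szegoInv a b α) _ 0 :=
    ((hasDerivAt_const (0 : ℂ) ((√a + √b : ℝ) : ℂ)).div (hasDerivAt_szegoDenom a b)
      (by simp [szegoDenom_zero])).cpow_const (szegoInv_base_zero_mem_slitPlane b ha)
  have hS : ((√a + √b : ℝ) : ℂ) ≠ 0 := by exact_mod_cast (by positivity : 0 < √a + √b).ne'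
  rw [h.deriv, szegoInv, Pi.div_apply, szegoDenom_zero, cpow_sub _ _ (by simpa using hS),
    cpow_one]
  generalize (((√a + √b : ℝ) : ℂ) / 2) ^ (α - 1 / 2 : ℂ) = P
  field_simp
  push_cast
  ring

end

lemma mul_szegoDenom_inv {a b : ℝ} {z : ℂ} (ha : |a| < ‖z‖) (hb : |b| < ‖z‖) :
    z * szegoDenom a b z⁻¹ = z + √(a * b) + (z - a) ^ (1 / 2 : ℂ) * (z - b) ^ (1 / 2 : ℂ) := by
  have hz : z ≠ 0 := norm_pos_iff.1 ((abs_nonneg a).trans_lt ha)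
  have hsq : z ^ (1 / 2 : ℂ) * z ^ (1 / 2 : ℂ) = z := by
    rw [← cpow_add _ _ hz]; norm_num
  rw [sub_ofReal_cpow ha, sub_ofReal_cpow hb, szegoDenom]
  linear_combination (√(a * b) : ℂ) * mul_inv_cancel₀ hz
    - (1 - a * z⁻¹) ^ (1 / 2 : ℂ) * (1 - b * z⁻¹) ^ (1 / 2 : ℂ) * hsq

theorem stmt_7_general (a b α : ℝ) (ha : 0 < a)
    (D : ℂ → ℂ)
    (hD : ∀ z : ℂ, D z =
      (((Real.sqrt a + Real.sqrt b : ℝ) : ℂ) * z /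
        (z + ((Real.sqrt (a * b) : ℝ) : ℂ)
          + (z - (a : ℂ)) ^ ((1 : ℂ) / 2) * (z - (b : ℂ)) ^ ((1 : ℂ) / 2)))
        ^ ((α : ℂ) - 1 / 2)) :
    ∃ C R : ℝ, 0 < C ∧ ∀ z : ℂ, R ≤ ‖z‖ →
      ‖D z - ((((Real.sqrt a + Real.sqrt b) / 2) ^ (α - 1 / 2) : ℝ) : ℂ)
          * (1 + (((2 * α - 1) * (a + b - 2 * Real.sqrt (a * b)) : ℝ) : ℂ) / (8 * z))‖
        ≤ C / ‖z‖ ^ 2 := by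
  set g := szegoInv a b α
  have htaylor : (fun z : ℂ => g z⁻¹ - g 0 - z⁻¹ * deriv g 0) =O[cobounded ℂ]
      fun z => ‖z⁻¹‖ ^ 2 := by
    simpa only [Function.comp_def, zero_add, smul_eq_mul] using
      (analyticAt_szegoInv b α ha).isBigO_sub_sub_smul_deriv.comp_tendsto tendsto_inv₀_cobounded
  obtain ⟨C, hC, hbound⟩ := htaylor.exists_pos
  have hlarge := hbound.bound.and (eventually_cobounded_le_norm (max |a| |b| + 1))
  rw [← comap_norm_atTop, eventually_comap, eventually_atTop] at hlarge
  obtain ⟨R, hR⟩ := hlarge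
  refine ⟨C, R, hC, fun z hzR => ?_⟩
  obtain ⟨hCz, hzab⟩ := hR ‖z‖ hzR z rfl
  have hza : |a| < ‖z‖ := by linarith [le_max_left |a| |b|]
  have hzb : |b| < ‖z‖ := by linarith [le_max_right |a| |b|]
  have hz : z ≠ 0 := norm_pos_iff.1 ((abs_nonneg a).trans_lt hza)
  have hDz : D z = g z⁻¹ := by
    rw [hD, ← mul_szegoDenom_inv hza hzb, mul_comm _ z, mul_div_mul_left _ _ hz]
    rfl
  rw [deriv_szegoInv_zero b α ha] at hCz
  rw [hDz, ← szegoInv_zero]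
  calc _ = ‖g z⁻¹ - g 0 - z⁻¹ * (g 0 * ((2 * α - 1) * (a + b - 2 * √(a * b)) : ℝ) / 8)‖ := by
        congr 1; field_simp; ring
    _ ≤ C * ‖‖z⁻¹‖ ^ 2‖ := hCz
    _ = C / ‖z‖ ^ 2 := by rw [norm_pow, norm_norm, norm_inv, inv_pow, div_eq_mul_inv]

/-- Asymptotics of the Szegő function:
`D(z) = D_∞ (1 + (2α−1)(a+b−2√(ab))/(8z) + O(1/z²))` as `z → ∞`,
where `D_∞ = ((√a+√b)/2)^{α−1/2}`. -/
theorem stmt_7 (a b α : ℝ) (ha : 0 < a) (hab : a < b)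
    (D : ℂ → ℂ)
    (hD : ∀ z : ℂ, D z =
      (((Real.sqrt a + Real.sqrt b : ℝ) : ℂ) * z /
        (z + ((Real.sqrt (a * b) : ℝ) : ℂ)
          + (z - (a : ℂ)) ^ ((1 : ℂ) / 2) * (z - (b : ℂ)) ^ ((1 : ℂ) / 2)))
        ^ ((α : ℂ) - 1 / 2)) :
    ∃ C R : ℝ, 0 < C ∧ ∀ z : ℂ, R ≤ ‖z‖ →
      ‖D z - ((((Real.sqrt a + Real.sqrt b) / 2) ^ (α - 1 / 2) : ℝ) : ℂ)
          * (1 + (((2 * α - 1) * (a + b - 2 * Real.sqrt (a * b)) : ℝ) : ℂ) / (8 * z))‖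
        ≤ C / ‖z‖ ^ 2 :=
  stmt_7_general a b α ha D hD
end

section
/- Let ρ be a probability density on [0,b] which equals 1/(2√x) on (0,a) for some 0 < a < b, and g(z) = ∫₀^b log(z−s) ρ(s) ds. Then for x ∈ (0,a), the boundary values satisfy g±(x) = ∫₀^b log|x−s| ρ(s) ds ± πi(1 − √x). -/
/-!
As `ε → 0⁺`, `log (x + iε - s) → log |x - s| + πi·[s > x]` for every `s ≠ x`. Near `x`
the density is `1/(2√s)`, hence bounded, so `|log (x + iε - s)| ρ(s)` has an integrable
majorant and dominated convergence gives `g₊(x) = ∫ log |x - s| ρ(s) ds + πi ∫ₓᵇ ρ`. Finally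
`∫ₓᵇ ρ = 1 - ∫₀ˣ ds/(2√s) = 1 - √x`, and `g (conj z) = conj (g z)` gives `g₋`.
-/

open MeasureTheory Set Filter Topology Complex
open scoped ComplexConjugate Interval Real

theorem intervalIntegral.integral_indicator_Ioi {E : Type*} [NormedAddCommGroup E]
    [NormedSpace ℝ E] {f : ℝ → E} {μ : Measure ℝ} {a b x : ℝ} (hx : x ∈ Icc a b) :
    ∫ s in a..b, (Ioi x).indicator f s ∂μ = ∫ s in x..b, f s ∂μ := by
  rw [integral_of_le (hx.1.trans hx.2), integral_of_le hx.2,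
    MeasureTheory.integral_indicator measurableSet_Ioi, Measure.restrict_restrict measurableSet_Ioi,
    inter_comm, Ioc_inter_Ioi, sup_eq_right.2 hx.1]

theorem integral_one_div_two_mul_sqrt {x : ℝ} (hx : 0 ≤ x) :
    ∫ s in (0 : ℝ)..x, 1 / (2 * √s) = √x := by
  have hderiv : ∀ s ∈ Ioo 0 x, HasDerivAt Real.sqrt (1 / (2 * √s)) s :=
    fun s hs => Real.hasDerivAt_sqrt hs.1.ne'
  have hint : IntervalIntegrable (fun s => 1 / (2 * √s)) volume 0 x :=
    intervalIntegral.intervalIntegrable_deriv_of_nonneg Real.continuous_sqrt.continuousOn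
      (by simpa [hx] using hderiv) (fun s _ => by positivity)
  simpa using intervalIntegral.integral_eq_sub_of_hasDerivAt_of_le hx
    Real.continuous_sqrt.continuousOn hderiv hint

theorem integral_indicator_Ioi_of_eq_one_div_two_mul_sqrt {ρ : ℝ → ℝ} {b x : ℝ}
    (hρ : IntervalIntegrable ρ volume 0 b) (hx : x ∈ Icc 0 b)
    (hsat : ∀ s ∈ Ioc 0 x, ρ s = 1 / (2 * √s)) :
    ∫ s in (0 : ℝ)..b, (Ioi x).indicator ρ s = (∫ s in (0 : ℝ)..b, ρ s) - √x := by
  have hhead : ∫ s in (0 : ℝ)..x, ρ s = √x := by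
    rw [← integral_one_div_two_mul_sqrt hx.1]
    refine intervalIntegral.integral_congr_ae (ae_of_all _ fun s hs => hsat s ?_)
    rwa [uIoc_of_le hx.1] at hs
  rw [intervalIntegral.integral_indicator_Ioi hx, ← hhead,
    intervalIntegral.integral_interval_sub_left hρ
      (hρ.mono_set (uIcc_subset_uIcc_left (Icc_subset_uIcc hx)))]

theorem Complex.tendsto_ofReal_add_mul_I_nhdsGT (t : ℝ) :
    Tendsto (fun ε : ℝ => (t : ℂ) + ε * I) (𝓝[>] 0) (𝓝[{z | 0 < z.im}] (t : ℂ)) := by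
  refine tendsto_nhdsWithin_iff.2 ⟨?_, ?_⟩
  · have : Continuous fun ε : ℝ => (t : ℂ) + ε * I := by fun_prop
    simpa using (this.tendsto 0).mono_left nhdsWithin_le_nhds
  · filter_upwards [self_mem_nhdsWithin] with ε (hε : 0 < ε)
    simpa using hε

theorem Complex.tendsto_conj_ofReal_add_mul_I_nhdsGT (t : ℝ) :
    Tendsto (fun ε : ℝ => conj ((t : ℂ) + ε * I)) (𝓝[>] 0)
      (𝓝[{z | z.im < 0}] (t : ℂ)) := by
  have hmaps : MapsTo conj {z : ℂ | 0 < z.im} {z | z.im < 0} := fun z hz => by simpa using hz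
  simpa only [conj_ofReal, Function.comp_def] using
    (continuous_conj.continuousWithinAt.tendsto_nhdsWithin hmaps).comp
      (tendsto_ofReal_add_mul_I_nhdsGT t)

theorem Complex.tendsto_log_ofReal_add_mul_I_nhdsGT {t : ℝ} (ht : t ≠ 0) :
    Tendsto (fun ε : ℝ => log (t + ε * I)) (𝓝[>] 0)
      (𝓝 (Real.log |t| + if t < 0 then π * I else 0)) := by
  have hpath := tendsto_ofReal_add_mul_I_nhdsGT t
  rcases ht.lt_or_gt with hneg | hpos
  · have hlog := tendsto_log_nhdsWithin_im_nonneg_of_re_neg_of_im_zero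
      (z := t) (by simpa using hneg) (ofReal_im t)
    rw [norm_real, Real.norm_eq_abs] at hlog
    rw [if_pos hneg]
    exact hlog.comp (hpath.mono_right (nhdsWithin_mono _ fun z (hz : 0 < z.im) => hz.le))
  · have hslit : (t : ℂ) ∈ slitPlane := ofReal_mem_slitPlane.2 hpos
    rw [if_neg hpos.not_gt, add_zero, abs_of_pos hpos, ofReal_log hpos.le]
    exact (continuousAt_clog hslit).tendsto.comp (hpath.mono_right nhdsWithin_le_nhds)

theorem Complex.norm_log_ofReal_add_mul_I_le {t ε : ℝ} (ht : t ≠ 0) (hε : |ε| ≤ 1) :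
    ‖log (t + ε * I)‖ ≤ |Real.log (|t|)| + |t| + π := by
  set w : ℂ := t + ε * I
  have hre : w.re = t := by simp [w]
  have him : w.im = ε := by simp [w]
  have hlower : |t| ≤ ‖w‖ := hre ▸ abs_re_le_norm w
  have hupper : ‖w‖ ≤ |t| + 1 := by
    have := norm_le_abs_re_add_abs_im w
    rw [hre, him] at this
    linarith
  have ht' : 0 < |t| := abs_pos.2 ht
  have hlog_lower : Real.log |t| ≤ Real.log ‖w‖ := Real.log_le_log ht' hlower
  have hlog_upper : Real.log ‖w‖ ≤ ‖w‖ - 1 :=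
    Real.log_le_sub_one_of_pos (ht'.trans_le hlower)
  have hlog_abs : |Real.log ‖w‖| ≤ |Real.log (|t|)| + |t| :=
    abs_le.2 ⟨by linarith [neg_abs_le (Real.log |t|)], by linarith [abs_nonneg (Real.log |t|)]⟩
  calc ‖log w‖ ≤ |Real.log ‖w‖| + |w.arg| := by
        simpa only [log_re, log_im] using norm_le_abs_re_add_abs_im (log w)
    _ ≤ |Real.log (|t|)| + |t| + π := add_le_add hlog_abs (abs_arg_le_pi w)

theorem IntervalIntegrable.log_abs_sub_mul {ρ : ℝ → ℝ} {a b x M : ℝ}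
    (hρ : IntervalIntegrable ρ volume a b) (hbdd : ∀ᶠ s in 𝓝 x, |ρ s| ≤ M) :
    IntervalIntegrable (fun s => Real.log |x - s| * ρ s) volume a b := by
  obtain ⟨δ, hδ, hnear⟩ := Metric.eventually_nhds_iff.1 hbdd
  have hlog : IntervalIntegrable (fun s => Real.log |x - s|) volume a b := by
    simpa only [Real.log_abs, sub_sub_cancel] using
      (intervalIntegral.intervalIntegrable_log' (a := x - a) (b := x - b)).comp_sub_left x
  have hmajor : IntervalIntegrable
      (fun s => M * |Real.log (|x - s|)| + (|Real.log δ| + |x - s|) * |ρ s|) volume a b :=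
    (hlog.abs.const_mul M).add (hρ.abs.continuousOn_mul (by fun_prop))
  have hmeas : Measurable fun s => Real.log |x - s| := by fun_prop
  refine hmajor.mono_fun (hmeas.aestronglyMeasurable.mul hρ.def'.aestronglyMeasurable)
    (ae_of_all _ fun s => ?_)
  have hM : 0 ≤ M := (abs_nonneg _).trans (hnear (dist_self x ▸ hδ))
  have hmajor_nonneg : 0 ≤ M * |Real.log (|x - s|)| + (|Real.log δ| + |x - s|) * |ρ s| := by
    positivity
  simp only [Real.norm_eq_abs]
  rw [abs_of_nonneg hmajor_nonneg, abs_mul]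
  by_cases hs : |x - s| < δ
  · have : |ρ s| ≤ M := hnear (by rwa [Real.dist_eq, abs_sub_comm])
    nlinarith [mul_le_mul_of_nonneg_left this (abs_nonneg (Real.log |x - s|)),
      mul_nonneg (add_nonneg (abs_nonneg (Real.log δ)) (abs_nonneg (x - s))) (abs_nonneg (ρ s))]
  · replace hs := not_lt.1 hs
    have hlog_le : |Real.log (|x - s|)| ≤ |Real.log δ| + |x - s| := by
      have h1 : Real.log δ ≤ Real.log |x - s| := Real.log_le_log hδ hs
      have h2 : Real.log |x - s| ≤ |x - s| - 1 := Real.log_le_sub_one_of_pos (hδ.trans_le hs)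
      exact abs_le.2
        ⟨by linarith [neg_abs_le (Real.log δ)], by linarith [abs_nonneg (Real.log δ)]⟩
    nlinarith [mul_le_mul_of_nonneg_right hlog_le (abs_nonneg (ρ s)),
      mul_nonneg hM (abs_nonneg (Real.log |x - s|))]

theorem tendsto_integral_log_ofReal_add_mul_I_sub_mul {ρ : ℝ → ℝ} {a b x M : ℝ}
    (hρ : IntervalIntegrable ρ volume a b) (hbdd : ∀ᶠ s in 𝓝 x, |ρ s| ≤ M) :
    Tendsto (fun ε : ℝ => ∫ s in a..b, log (x + ε * I - s) * ρ s) (𝓝[>] 0)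
      (𝓝 ((∫ s in a..b, Real.log |x - s| * ρ s : ℝ)
        + π * I * (∫ s in a..b, (Ioi x).indicator ρ s : ℝ))) := by
  have hshift : ∀ ε s : ℝ, (x : ℂ) + ε * I - s = ((x - s : ℝ) : ℂ) + ε * I := by
    intros; push_cast; ring
  have hmeas : ∀ ε : ℝ, AEStronglyMeasurable (fun s : ℝ => log (x + ε * I - s) * ρ s)
      (volume.restrict (Ι a b)) := fun ε =>
    (by fun_prop : Measurable fun s : ℝ => log (x + ε * I - s)).aestronglyMeasurable.mul
      (continuous_ofReal.comp_aestronglyMeasurable hρ.def'.aestronglyMeasurable)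
  have hbound : ∀ᶠ ε : ℝ in 𝓝[>] 0, ∀ᵐ s, s ∈ Ι a b →
      ‖log (x + ε * I - s) * ρ s‖ ≤ (|Real.log (|x - s|)| + |x - s| + π) * |ρ s| := by
    filter_upwards [Ioo_mem_nhdsGT one_pos] with ε hε
    filter_upwards [volume.ae_ne x] with s hs _
    rw [norm_mul, norm_real, Real.norm_eq_abs, hshift]
    exact mul_le_mul_of_nonneg_right (norm_log_ofReal_add_mul_I_le (sub_ne_zero.2 hs.symm)
      (abs_le.2 ⟨by linarith [hε.1], hε.2.le⟩)) (abs_nonneg _)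
  have hbound_int : IntervalIntegrable
      (fun s => (|Real.log (|x - s|)| + |x - s| + π) * |ρ s|) volume a b := by
    simpa only [add_mul, ← abs_mul, add_assoc] using (hρ.log_abs_sub_mul hbdd).abs.add
      (hρ.abs.continuousOn_mul (g := fun s => |x - s| + π) (by fun_prop))
  have hlim : ∀ᵐ s, s ∈ Ι a b →
      Tendsto (fun ε : ℝ => log (x + ε * I - s) * ρ s) (𝓝[>] 0)
      (𝓝 ((Real.log |x - s| * ρ s : ℝ) + π * I * ((Ioi x).indicator ρ s : ℝ))) := by
    filter_upwards [volume.ae_ne x] with s hs _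
    have := (tendsto_log_ofReal_add_mul_I_nhdsGT (sub_ne_zero.2 hs.symm)).mul_const (ρ s : ℂ)
    simp only [← hshift] at this
    convert this using 2
    simp only [indicator, mem_Ioi, sub_neg]
    split_ifs <;> push_cast <;> ring
  convert intervalIntegral.tendsto_integral_filter_of_dominated_convergence _
    (Eventually.of_forall hmeas) hbound hbound_int hlim using 2
  have hofReal {u : ℝ → ℝ} (hu : IntervalIntegrable u volume a b) :
      IntervalIntegrable (fun s => (u s : ℂ)) volume a b :=
    intervalIntegrable_iff.2 (intervalIntegrable_iff.1 hu).ofReal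
  have hint_ind : IntervalIntegrable ((Ioi x).indicator ρ) volume a b :=
    intervalIntegrable_iff.2 ((intervalIntegrable_iff.1 hρ).indicator measurableSet_Ioi)
  rw [intervalIntegral.integral_add (hofReal (hρ.log_abs_sub_mul hbdd))
      ((hofReal hint_ind).const_mul _),
    intervalIntegral.integral_const_mul, intervalIntegral.integral_ofReal,
    intervalIntegral.integral_ofReal]

theorem integral_log_conj_sub_mul (a b : ℝ) (ρ : ℝ → ℝ) {z : ℂ} (hz : z.im ≠ 0) :
    ∫ s in a..b, log (conj z - s) * ρ s = conj (∫ s in a..b, log (z - s) * ρ s) := by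
  rw [← intervalIntegral.intervalIntegral_conj]
  refine intervalIntegral.integral_congr fun s _ => ?_
  have harg : (z - s).arg ≠ π := fun h => hz (by simpa using (arg_eq_pi_iff.1 h).2)
  rw [map_mul, conj_ofReal, ← log_conj _ harg, map_sub, conj_ofReal]

theorem stmt_9_general (a b : ℝ) (hab : a < b) (ρ : ℝ → ℝ)
    (hρint : IntervalIntegrable ρ MeasureTheory.volume 0 b)
    (hρmass : (∫ s in (0 : ℝ)..b, ρ s) = 1)
    (hρsat : ∀ x ∈ Set.Ioo (0 : ℝ) a, ρ x = 1 / (2 * Real.sqrt x))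
    (g : ℂ → ℂ)
    (hg : ∀ z : ℂ, g z = ∫ s in (0 : ℝ)..b, Complex.log (z - (s : ℂ)) * (ρ s : ℂ))
    (x : ℝ) (hx : x ∈ Set.Ioo (0 : ℝ) a) :
    (∀ gp : ℂ, Tendsto g (nhdsWithin (x : ℂ) {z : ℂ | 0 < z.im}) (nhds gp) →
      gp = ((∫ s in (0 : ℝ)..b, Real.log |x - s| * ρ s : ℝ) : ℂ)
        + (Real.pi : ℂ) * Complex.I * ((1 - Real.sqrt x : ℝ) : ℂ)) ∧
    (∀ gm : ℂ, Tendsto g (nhdsWithin (x : ℂ) {z : ℂ | z.im < 0}) (nhds gm) →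
      gm = ((∫ s in (0 : ℝ)..b, Real.log |x - s| * ρ s : ℝ) : ℂ)
        - (Real.pi : ℂ) * Complex.I * ((1 - Real.sqrt x : ℝ) : ℂ)) := by
  obtain ⟨hx0, hxa⟩ := hx
  set L : ℂ := ((∫ s in (0 : ℝ)..b, Real.log |x - s| * ρ s : ℝ) : ℂ)
    + (Real.pi : ℂ) * Complex.I * ((1 - Real.sqrt x : ℝ) : ℂ)
  have hρ_near : (fun s => 1 / (2 * √s)) =ᶠ[𝓝 x] ρ :=
    eventually_of_mem (Ioo_mem_nhds hx0 hxa) fun s hs => (hρsat s hs).symm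
  have hρ_cont : ContinuousAt ρ x :=
    (continuousAt_const.div (by fun_prop) (by positivity)).congr hρ_near
  have hρ_bdd : ∀ᶠ s in 𝓝 x, |ρ s| ≤ |ρ x| + 1 :=
    (hρ_cont.abs.eventually_lt continuousAt_const (lt_add_one _)).mono fun _ => le_of_lt
  have htail : ∫ s in (0 : ℝ)..b, (Ioi x).indicator ρ s = 1 - √x := by
    rw [integral_indicator_Ioi_of_eq_one_div_two_mul_sqrt hρint ⟨hx0.le, (hxa.trans hab).le⟩
      fun s hs => hρsat s ⟨hs.1, hs.2.trans_lt hxa⟩, hρmass]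
  have hupper : Tendsto (fun ε : ℝ => g (x + ε * I)) (𝓝[>] 0) (𝓝 L) := by
    simpa only [hg, htail] using tendsto_integral_log_ofReal_add_mul_I_sub_mul hρint hρ_bdd
  have hlower : Tendsto (fun ε : ℝ => g (conj (x + ε * I))) (𝓝[>] 0) (𝓝 (conj L)) := by
    refine ((continuous_conj.tendsto L).comp hupper).congr' ?_
    filter_upwards [self_mem_nhdsWithin] with ε (hε : 0 < ε)
    rw [Function.comp_apply, hg, hg, integral_log_conj_sub_mul _ _ _ (by simpa using hε.ne')]
  refine ⟨fun gp hgp => tendsto_nhds_unique (hgp.comp (tendsto_ofReal_add_mul_I_nhdsGT x)) hupper,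
    fun gm hgm => ?_⟩
  rw [tendsto_nhds_unique (hgm.comp (tendsto_conj_ofReal_add_mul_I_nhdsGT x)) hlower]
  simp only [L, map_add, map_mul, conj_ofReal, conj_I]
  ring

/-- In the saturated region `(0,a)`, where the density equals `1/(2√x)`, the boundary
values of `g` are `g±(x) = ∫₀^b log|x−s| ρ(s)ds ± πi(1 − √x)`. -/
theorem stmt_9 (a b : ℝ) (ha : 0 < a) (hab : a < b) (ρ : ℝ → ℝ)
    (hρint : IntervalIntegrable ρ MeasureTheory.volume 0 b)
    (hρpos : ∀ s ∈ Set.Icc (0 : ℝ) b, 0 ≤ ρ s)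
    (hρmass : (∫ s in (0 : ℝ)..b, ρ s) = 1)
    (hρsat : ∀ x ∈ Set.Ioo (0 : ℝ) a, ρ x = 1 / (2 * Real.sqrt x))
    (g : ℂ → ℂ)
    (hg : ∀ z : ℂ, g z = ∫ s in (0 : ℝ)..b, Complex.log (z - (s : ℂ)) * (ρ s : ℂ))
    (x : ℝ) (hx : x ∈ Set.Ioo (0 : ℝ) a) :
    (∀ gp : ℂ, Tendsto g (nhdsWithin (x : ℂ) {z : ℂ | 0 < z.im}) (nhds gp) →
      gp = ((∫ s in (0 : ℝ)..b, Real.log |x - s| * ρ s : ℝ) : ℂ)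
        + (Real.pi : ℂ) * Complex.I * ((1 - Real.sqrt x : ℝ) : ℂ)) ∧
    (∀ gm : ℂ, Tendsto g (nhdsWithin (x : ℂ) {z : ℂ | z.im < 0}) (nhds gm) →
      gm = ((∫ s in (0 : ℝ)..b, Real.log |x - s| * ρ s : ℝ) : ℂ)
        - (Real.pi : ℂ) * Complex.I * ((1 - Real.sqrt x : ℝ) : ℂ)) :=
  stmt_9_general a b hab ρ hρint hρmass hρsat g hg x hx
end
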